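/- arXiv:1407.3694 — 2 statements merged into one kernel-verified Lean document; each statement's English description precedes it below -/
import Mathlib

section
/- Let f(x) = (log(x+e))^a − 1 and g(x) = (log(x+e))^b − 1 with 0 < a² < b < a < 1, and let h(W) = e^{C₁W}(C₂+K) for positive constants C₁, C₂, K. Then for any c ∈ (0,1), the limit as x → ∞ of f'(f⁻¹(g((1−c)x))) · h(f((1+c)x)) equals 0. -/
/-!
Write `ℓ x = log ((1 - c) x + e)` and `m x = log ((1 + c) x + e)`. Unwinding the definitions, the
expression equals `a (C₂ + K) ℓ^{(b/a)(a-1)} exp (C₁ m^a - ℓ^{b/a} - C₁)`. The power of `ℓ` is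
at most `1` once `ℓ ≥ 1`. Since `m ≤ 2ℓ` eventually and `a < b/a` (that is, `a² < b`), the term
`ℓ^{b/a}` swamps `C₁ m^a`, so the exponent tends to `-∞`.
-/

open Filter Real

theorem tendsto_log_mul_add_atTop {r : ℝ} (hr : 0 < r) (d : ℝ) :
    Tendsto (fun x => log (r * x + d)) atTop atTop :=
  tendsto_log_atTop.comp (tendsto_atTop_add_const_right _ d (tendsto_id.const_mul_atTop hr))

theorem log_mul_add_exp_le_log_div_add {r s x : ℝ} (hr : 0 < r) (hrs : r ≤ s) (hx : 0 ≤ x) :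
    log (s * x + exp 1) ≤ log (s / r) + log (r * x + exp 1) := by
  have hs : 0 < s := hr.trans_le hrs
  have hsr : 1 ≤ s / r := (one_le_div hr).2 hrs
  rw [← log_mul (by positivity) (by positivity)]
  refine log_le_log (by positivity) ?_
  calc s * x + exp 1 ≤ s * x + s / r * exp 1 := by
        linarith [mul_le_mul_of_nonneg_right hsr (exp_pos 1).le]
    _ = s / r * (r * x + exp 1) := by field_simp

theorem eventually_log_mul_add_exp_le_two_mul {r s : ℝ} (hr : 0 < r) (hrs : r ≤ s) :
    ∀ᶠ x in atTop, log (s * x + exp 1) ≤ 2 * log (r * x + exp 1) := by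
  filter_upwards [eventually_ge_atTop 0,
    (tendsto_log_mul_add_atTop hr (exp 1)).eventually_ge_atTop (log (s / r))] with x hx hℓ
  linarith [log_mul_add_exp_le_log_div_add hr hrs hx]

theorem tendsto_const_mul_rpow_sub_rpow_atBot {α : Type*} {l : Filter α} {u v : α → ℝ}
    {a q k : ℝ} (C : ℝ) (ha : 0 ≤ a) (haq : a < q) (hk : 0 ≤ k) (hv : Tendsto v l atTop)
    (hu : ∀ᶠ x in l, 0 ≤ u x ∧ u x ≤ k * v x) :
    Tendsto (fun x => C * u x ^ a - v x ^ q) l atBot := by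
  set M := |C| * k ^ a + 1
  have hM : 0 < M := by positivity
  have hsmall : Tendsto (fun x => v x ^ (a - q)) l (nhds 0) := by
    simpa [Function.comp_def] using (tendsto_rpow_neg_atTop (sub_pos.2 haq)).comp hv
  have hvq : Tendsto (fun x => -(v x ^ q * (1 / 2))) l atBot :=
    tendsto_neg_atTop_atBot.comp (((tendsto_rpow_atTop (ha.trans_lt haq)).comp hv).atTop_mul_const
      (by norm_num))
  refine tendsto_atBot_mono' l ?_ hvq
  filter_upwards [hu, hv.eventually_gt_atTop 0,
    hsmall.eventually_le_const (show 0 < 1 / (2 * M) by positivity)] with x ⟨hu0, huv⟩ hv0 hvs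
  have hsplit : v x ^ a = v x ^ (a - q) * v x ^ q := by
    rw [← rpow_add hv0, sub_add_cancel]
  have hbound : C * u x ^ a ≤ v x ^ q * (1 / 2) := calc
    C * u x ^ a ≤ |C| * (k * v x) ^ a :=
        mul_le_mul (le_abs_self C) (rpow_le_rpow hu0 huv ha) (by positivity) (abs_nonneg C)
    _ ≤ M * v x ^ a := by
        rw [mul_rpow hk hv0.le, ← mul_assoc]; gcongr; exact le_add_of_nonneg_right zero_le_one
    _ ≤ M * (1 / (2 * M) * v x ^ q) := by rw [hsplit]; gcongr
    _ = v x ^ q * (1 / 2) := by field_simp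
  linarith

theorem tendsto_rpow_mul_exp_of_tendsto_atBot {α : Type*} {l : Filter α} {t E : α → ℝ} {p : ℝ}
    (hp : p ≤ 0) (ht : ∀ᶠ x in l, 1 ≤ t x) (hE : Tendsto E l atBot) :
    Tendsto (fun x => t x ^ p * exp (E x)) l (nhds 0) := by
  refine squeeze_zero' ?_ ?_ (tendsto_exp_atBot.comp hE)
  · filter_upwards [ht] with x hx
    have := zero_le_one.trans hx
    positivity
  · filter_upwards [ht] with x hx
    exact mul_le_of_le_one_left (exp_pos _).le (rpow_le_one_of_one_le_of_nonpos hx hp)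

theorem stmt3_general (a b c C₁ C₂ K : ℝ)
    (ha0 : 0 < a) (hab : a ^ 2 < b) (ha1 : a < 1)
    (hc0 : 0 < c) (hc1 : c < 1)
    (f g h f' finv : ℝ → ℝ)
    (hf : ∀ x, f x = (Real.log (x + Real.exp 1)) ^ a - 1)
    (hg : ∀ x, g x = (Real.log (x + Real.exp 1)) ^ b - 1)
    (hh : ∀ W, h W = Real.exp (C₁ * W) * (C₂ + K))
    (hf' : ∀ x, f' x = a * (Real.log (x + Real.exp 1)) ^ (a - 1) / (x + Real.exp 1))
    (hfinv : ∀ y, finv y = Real.exp ((y + 1) ^ (1 / a)) - Real.exp 1) :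
    Filter.Tendsto (fun x : ℝ => f' (finv (g ((1 - c) * x))) * h (f ((1 + c) * x)))
      Filter.atTop (nhds 0) := by
  set ℓ := fun x => log ((1 - c) * x + exp 1)
  set m := fun x => log ((1 + c) * x + exp 1)
  have hℓ : Tendsto ℓ atTop atTop := tendsto_log_mul_add_atTop (by linarith) _
  have hqa : a < b / a := by rw [lt_div_iff₀ ha0, ← sq]; exact hab
  have hexp : Tendsto (fun x => C₁ * m x ^ a - ℓ x ^ (b / a) - C₁) atTop atBot := by
    refine tendsto_atBot_add_const_right _ _
      (tendsto_const_mul_rpow_sub_rpow_atBot C₁ ha0.le hqa zero_le_two hℓ ?_)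
    have hm : Tendsto m atTop atTop := tendsto_log_mul_add_atTop (by linarith) _
    filter_upwards [hm.eventually_ge_atTop 0,
      eventually_log_mul_add_exp_le_two_mul (by linarith) (by linarith : 1 - c ≤ 1 + c)]
      with x hm0 hmℓ
    exact ⟨hm0, hmℓ⟩
  have hform : ∀ᶠ x in atTop,
      a * (C₂ + K) * (ℓ x ^ (b / a * (a - 1)) * exp (C₁ * m x ^ a - ℓ x ^ (b / a) - C₁)) =
        f' (finv (g ((1 - c) * x))) * h (f ((1 + c) * x)) := by
    filter_upwards [hℓ.eventually_ge_atTop 0] with x hx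
    simp only [hg, hfinv, hf', hh, hf, sub_add_cancel, log_exp]
    rw [show log ((1 + c) * x + exp 1) = m x from rfl, ← rpow_mul hx, mul_one_div, ← rpow_mul hx,
      mul_sub_one C₁, exp_sub, exp_sub, exp_sub]
    field_simp
  have hp : b / a * (a - 1) ≤ 0 :=
    mul_nonpos_of_nonneg_of_nonpos (div_pos ((pow_pos ha0 2).trans hab) ha0).le (by linarith)
  refine Tendsto.congr' hform ?_
  simpa using (tendsto_rpow_mul_exp_of_tendsto_atBot hp (hℓ.eventually_ge_atTop 1) hexp).const_mul
    (a * (C₂ + K))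

/-- Let `f x = (log(x+e))^a − 1`, `g x = (log(x+e))^b − 1` with `0 < a² < b < a < 1`, and
`h W = e^{C₁W}(C₂+K)` with `C₁, C₂, K > 0`. Then for any `c ∈ (0,1)`,
`f'(f⁻¹(g((1−c)x))) · h(f((1+c)x)) → 0` as `x → ∞`. -/
theorem stmt3 (a b c C₁ C₂ K : ℝ)
    (ha0 : 0 < a) (hab : a ^ 2 < b) (hba : b < a) (ha1 : a < 1)
    (hC₁ : 0 < C₁) (hC₂ : 0 < C₂) (hK : 0 < K)
    (hc0 : 0 < c) (hc1 : c < 1)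
    (f g h f' finv : ℝ → ℝ)
    (hf : ∀ x, f x = (Real.log (x + Real.exp 1)) ^ a - 1)
    (hg : ∀ x, g x = (Real.log (x + Real.exp 1)) ^ b - 1)
    (hh : ∀ W, h W = Real.exp (C₁ * W) * (C₂ + K))
    (hf' : ∀ x, f' x = a * (Real.log (x + Real.exp 1)) ^ (a - 1) / (x + Real.exp 1))
    (hfinv : ∀ y, finv y = Real.exp ((y + 1) ^ (1 / a)) - Real.exp 1) :
    Filter.Tendsto (fun x : ℝ => f' (finv (g ((1 - c) * x))) * h (f ((1 + c) * x)))
      Filter.atTop (nhds 0) :=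
  stmt3_general a b c C₁ C₂ K ha0 hab ha1 hc0 hc1 f g h f' finv hf hg hh hf' hfinv
end

section
/- Drift decomposition bound: Suppose f : ℝ≥0 → ℝ≥0 is increasing, concave, differentiable with f' decreasing, and F(x) = ∫₀ˣ f(s)ds. If Q, Q' ∈ ℤ≥0^n satisfy Q'_i − Q_i = A_i − σ_i·1{Q_i > 0} with A_i, σ_i ∈ {0,1}, then ∑_i F(Q'_i) − ∑_i F(Q_i) ≤ A·f(Q) − σ·f(Q) + n·f'(0), where f(Q) denotes the vector (f(Q_i))_i. -/
/-!
Put `Δ = Q'_i - Q_i ∈ {-1, 0, 1}`; the increment of `F` is `∫_{Q_i}^{Q_i + Δ} f`. As `f'` decreases,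
the mean value theorem gives `f y - f x ≤ f'(0) (y - x)` for `0 ≤ x ≤ y`. This bounds `f` above by
`f(Q_i) + f'(0)|Δ|` when `Δ ≥ 0`, and below by `f(Q_i) - f'(0)|Δ|` when `Δ < 0` (where the integral
runs backwards), so in both cases the increment is at most `Δ·f(Q_i) + f'(0)·Δ² ≤ Δ·f(Q_i) + f'(0)`,
using `f'(0) ≥ 0` by monotonicity. Finally `Δ·f(Q_i) = (A_i - σ_i) f(Q_i)`, since `f(0) = 0`
absorbs the indicator `1{Q_i > 0}`.
-/

open Set MeasureTheory intervalIntegral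

section DerivBounds

variable {f : ℝ → ℝ} {a : ℝ}

theorem sub_le_deriv_mul_sub_of_antitoneOn_deriv
    (hdiff : ∀ x ∈ Ici a, DifferentiableAt ℝ f x) (hanti : AntitoneOn (deriv f) (Ici a))
    {x y : ℝ} (hx : a ≤ x) (hxy : x ≤ y) : f y - f x ≤ deriv f a * (y - x) := by
  refine (convex_Ici a).image_sub_le_mul_sub_of_deriv_le
    (fun z hz ↦ (hdiff z hz).continuousAt.continuousWithinAt)
    (fun z hz ↦ (hdiff z (interior_subset hz)).differentiableWithinAt)
    (fun z hz ↦ ?_) x hx y (hx.trans hxy) hxy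
  have hz : a ≤ z := interior_subset (s := Ici a) hz
  exact hanti self_mem_Ici hz hz

theorem deriv_nonneg_of_monotoneOn_Ici (hmono : MonotoneOn f (Ici a))
    (hdiff : DifferentiableAt ℝ f a) : 0 ≤ deriv f a := by
  rw [← hdiff.derivWithin (uniqueDiffOn_Ici a a self_mem_Ici)]
  exact hmono.derivWithin_nonneg

end DerivBounds

theorem intervalIntegral_le_sub_mul_add_sq {f : ℝ → ℝ} {C a b : ℝ} (hC : 0 ≤ C)
    (hf : IntervalIntegrable f volume a b)
    (hsub : ∀ x ∈ uIcc a b, ∀ y ∈ uIcc a b, x ≤ y → f y - f x ≤ C * (y - x)) :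
    ∫ s in a..b, f s ≤ (b - a) * f a + C * (b - a) ^ 2 := by
  rcases le_total a b with hab | hba
  · have hbound : ∀ s ∈ Icc a b, f s ≤ f a + C * (b - a) := by
      intro s hs
      have := hsub a (by simp [hab]) s (Icc_subset_uIcc hs) hs.1
      linarith [mul_le_mul_of_nonneg_left (sub_le_sub_right hs.2 a) hC]
    calc ∫ s in a..b, f s ≤ ∫ _ in a..b, (f a + C * (b - a)) :=
          integral_mono_on hab hf intervalIntegrable_const hbound
      _ = (b - a) * f a + C * (b - a) ^ 2 := by
        rw [intervalIntegral.integral_const, smul_eq_mul]; ring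
  · have hbound : ∀ s ∈ Icc b a, f a - C * (a - b) ≤ f s := by
      intro s hs
      have := hsub s (Icc_subset_uIcc' hs) a (by simp [hba]) hs.2
      linarith [mul_le_mul_of_nonneg_left (sub_le_sub_left hs.1 a) hC]
    have hlower : ∫ _ in b..a, (f a - C * (a - b)) ≤ ∫ s in b..a, f s :=
      integral_mono_on hba intervalIntegrable_const hf.symm hbound
    rw [intervalIntegral.integral_const, smul_eq_mul] at hlower
    rw [integral_symm]
    linarith

theorem queue_step_cast_sub {a s q q' : ℕ}
    (hstep : (q' : ℤ) = q + a - s * (if 0 < q then 1 else 0)) :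
    (q' : ℝ) - q = a - s * (if 0 < q then 1 else 0) := by
  have hℤ : (q' : ℤ) - q = a - s * (if 0 < q then 1 else 0) := by rw [hstep]; ring
  exact_mod_cast hℤ

theorem abs_queue_step_le_one {a s q q' : ℕ} (ha : a ≤ 1) (hs : s ≤ 1)
    (hstep : (q' : ℤ) = q + a - s * (if 0 < q then 1 else 0)) : |(q' : ℝ) - q| ≤ 1 := by
  rw [queue_step_cast_sub hstep, abs_le]
  have ha' : (a : ℝ) ≤ 1 := by exact_mod_cast ha
  have hs' : (s : ℝ) ≤ 1 := by exact_mod_cast hs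
  have ha₀ : (0 : ℝ) ≤ a := a.cast_nonneg
  have hs₀ : (0 : ℝ) ≤ s := s.cast_nonneg
  split_ifs <;> constructor <;> linarith

theorem queue_step_sub_mul {f : ℝ → ℝ} (hf0 : f 0 = 0) {a s q q' : ℕ}
    (hstep : (q' : ℤ) = q + a - s * (if 0 < q then 1 else 0)) :
    ((q' : ℝ) - q) * f q = a * f q - s * f q := by
  rw [queue_step_cast_sub hstep]
  rcases Nat.eq_zero_or_pos q with rfl | hq
  · simp [hf0]
  · simp only [hq, if_true]; ring

theorem integral_queue_step_le {f : ℝ → ℝ}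
    (hmono : MonotoneOn f (Ici 0)) (hdiff : ∀ x ∈ Ici (0 : ℝ), DifferentiableAt ℝ f x)
    (hanti : AntitoneOn (deriv f) (Ici 0)) (hf0 : f 0 = 0)
    {a s q q' : ℕ} (ha : a ≤ 1) (hs : s ≤ 1)
    (hstep : (q' : ℤ) = q + a - s * (if 0 < q then 1 else 0)) :
    (∫ x in (0 : ℝ)..q', f x) - ∫ x in (0 : ℝ)..q, f x ≤ a * f q - s * f q + deriv f 0 := by
  have hcont : ContinuousOn f (Ici 0) := fun x hx ↦
    (hdiff x hx).continuousAt.continuousWithinAt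
  have hint : ∀ {x y : ℝ}, 0 ≤ x → 0 ≤ y → IntervalIntegrable f volume x y := fun hx hy ↦
    (hcont.mono fun z hz ↦ (le_min hx hy).trans hz.1).intervalIntegrable
  have hd0 : 0 ≤ deriv f 0 := deriv_nonneg_of_monotoneOn_Ici hmono (hdiff 0 self_mem_Ici)
  have hq : (0 : ℝ) ≤ q := q.cast_nonneg
  have hq' : (0 : ℝ) ≤ q' := q'.cast_nonneg
  have hsq : ((q' : ℝ) - q) ^ 2 ≤ 1 :=
    (sq_le_one_iff_abs_le_one _).2 (abs_queue_step_le_one ha hs hstep)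
  have hincr :
      ∫ x in (q : ℝ)..q', f x ≤ ((q' : ℝ) - q) * f q + deriv f 0 * ((q' : ℝ) - q) ^ 2 :=
    intervalIntegral_le_sub_mul_add_sq hd0 (hint hq hq') fun x hx y _ hxy ↦
      sub_le_deriv_mul_sub_of_antitoneOn_deriv hdiff hanti ((le_min hq hq').trans hx.1) hxy
  rw [integral_interval_sub_left (hint le_rfl hq') (hint le_rfl hq),
    ← queue_step_sub_mul hf0 hstep]
  linarith [mul_le_mul_of_nonneg_left hsq hd0]

theorem stmt10_general (n : ℕ) (f : ℝ → ℝ)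
    (hfmono : MonotoneOn f (Set.Ici (0:ℝ)))
    (hfdiff : ∀ x ∈ Set.Ici (0:ℝ), DifferentiableAt ℝ f x)
    (hf'dec : AntitoneOn (deriv f) (Set.Ici (0:ℝ)))
    (hf0 : f 0 = 0)
    (A σ : Fin n → ℕ) (hA : ∀ i, A i ≤ 1) (hσ : ∀ i, σ i ≤ 1)
    (Q Q' : Fin n → ℕ)
    (hQ' : ∀ i, (Q' i : ℤ) = (Q i : ℤ) + (A i : ℤ) - (σ i : ℤ) * (if 0 < Q i then 1 else 0)) :
    (∑ i, ∫ s in (0:ℝ)..(Q' i : ℝ), f s) - (∑ i, ∫ s in (0:ℝ)..(Q i : ℝ), f s) ≤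
      (∑ i, (A i : ℝ) * f (Q i : ℝ)) - (∑ i, (σ i : ℝ) * f (Q i : ℝ)) + n * deriv f 0 := by
  calc (∑ i, ∫ s in (0:ℝ)..(Q' i : ℝ), f s) - (∑ i, ∫ s in (0:ℝ)..(Q i : ℝ), f s)
      = ∑ i, ((∫ s in (0:ℝ)..(Q' i : ℝ), f s) - ∫ s in (0:ℝ)..(Q i : ℝ), f s) :=
        (Finset.sum_sub_distrib _ _).symm
    _ ≤ ∑ i, ((A i : ℝ) * f (Q i) - (σ i : ℝ) * f (Q i) + deriv f 0) :=
        Finset.sum_le_sum fun i _ ↦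
          integral_queue_step_le hfmono hfdiff hf'dec hf0 (hA i) (hσ i) (hQ' i)
    _ = _ := by simp [Finset.sum_add_distrib, Finset.sum_sub_distrib]

/-- Drift decomposition bound: for `f` nonnegative, increasing, concave, differentiable with `f'`
decreasing and `f 0 = 0`, `F(x) = ∫₀ˣ f`, and queue update `Q'_i = Q_i + A_i − σ_i·1{Q_i > 0}`
with `A_i, σ_i ∈ {0,1}`, we have
`∑ F(Q'_i) − ∑ F(Q_i) ≤ A·f(Q) − σ·f(Q) + n·f'(0)`. -/
theorem stmt10 (n : ℕ) (f : ℝ → ℝ)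
    (hfnonneg : ∀ x ∈ Set.Ici (0:ℝ), 0 ≤ f x)
    (hfmono : MonotoneOn f (Set.Ici (0:ℝ)))
    (hfconc : ConcaveOn ℝ (Set.Ici (0:ℝ)) f)
    (hfdiff : ∀ x ∈ Set.Ici (0:ℝ), DifferentiableAt ℝ f x)
    (hf'dec : AntitoneOn (deriv f) (Set.Ici (0:ℝ)))
    (hf0 : f 0 = 0)
    (A σ : Fin n → ℕ) (hA : ∀ i, A i ≤ 1) (hσ : ∀ i, σ i ≤ 1)
    (Q Q' : Fin n → ℕ)
    (hQ' : ∀ i, (Q' i : ℤ) = (Q i : ℤ) + (A i : ℤ) - (σ i : ℤ) * (if 0 < Q i then 1 else 0)) :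
    (∑ i, ∫ s in (0:ℝ)..(Q' i : ℝ), f s) - (∑ i, ∫ s in (0:ℝ)..(Q i : ℝ), f s) ≤
      (∑ i, (A i : ℝ) * f (Q i : ℝ)) - (∑ i, (σ i : ℝ) * f (Q i : ℝ)) + n * deriv f 0 :=
  stmt10_general n f hfmono hfdiff hf'dec hf0 A σ hA hσ Q Q' hQ'
end
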